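/- arXiv:2105.06553 — 2 statements merged into one kernel-verified Lean document; each statement's English description precedes it below -/
import Mathlib

section
/- Let N and k be positive integers with k even, 4 ≤ k < N, and set r = min(N - k - 1, k/2). Then the clustering coefficient of the circulant graph C_{N,k} equals (C(k,2) - kr/2 + r(r-1)/2)/C(k,2). -/
set_option linter.unusedSectionVars false


open scoped Classical

/-- Circular distance between two elements of `ZMod N`. -/
def circDist {N : ℕ} (i j : ZMod N) : ℕ := min (i - j).val (j - i).val

/-- The circulant graph `C_{N,k}`: vertices `ZMod N`, `i ~ j` iff the circular
distance between `i` and `j` lies in `{1, ..., k/2}`. -/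
def circulant (N k : ℕ) : SimpleGraph (ZMod N) where
  Adj i j := 1 ≤ circDist i j ∧ circDist i j ≤ k / 2
  symm := ⟨by intro i j h; simpa [circDist, min_comm] using h⟩
  loopless := ⟨by intro i h; simp [circDist] at h⟩

section CircAux
open Finset

variable {N k : ℕ} [NeZero N]

lemma circulant_adj {i j : ZMod N} :
    (circulant N k).Adj i j ↔ 1 ≤ circDist i j ∧ circDist i j ≤ k / 2 := Iff.rfl

lemma zval_intCast (a : ℤ) : ((a : ZMod N)).val = (a % N).toNat := by
  have h := ZMod.val_intCast (n := N) a
  have h2 : 0 ≤ a % N := Int.emod_nonneg a (by exact_mod_cast (NeZero.ne N))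
  omega

lemma circ_min (c : ℤ) (hc : c.natAbs < N) :
    min ((c : ZMod N)).val (((-c : ℤ) : ZMod N)).val = min c.natAbs (N - c.natAbs) := by
  rw [zval_intCast, zval_intCast]
  rcases le_or_gt 0 c with h | h
  · have h1 : c % N = c := Int.emod_eq_of_lt h (by omega)
    rcases eq_or_lt_of_le h with h0 | h0
    · rw [← h0]; simp
    · have h2 : (-c) % N = N - c := by
        have he : (-c + N * 1) % N = (-c) % N := Int.add_mul_emod_self_left _ _ _
        rw [mul_one] at he
        rw [← he, Int.emod_eq_of_lt (by omega) (by omega)]; ring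
      rw [h1, h2]; omega
  · have h2 : (-c) % N = -c := Int.emod_eq_of_lt (by omega) (by omega)
    have h1 : c % N = c + N := by
      have he : (c + N * 1) % N = c % N := Int.add_mul_emod_self_left _ _ _
      rw [mul_one] at he
      rw [← he, Int.emod_eq_of_lt (by omega) (by omega)]
    rw [h1, h2]; omega

lemma circDist_cast (a b : ℤ) (h : (a - b).natAbs < N) :
    circDist (a : ZMod N) (b : ZMod N) = min (a - b).natAbs (N - (a - b).natAbs) := by
  have hm := circ_min (N := N) (a - b) h
  unfold circDist
  have e1 : (a : ZMod N) - b = ((a - b : ℤ) : ZMod N) := by push_cast; ring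
  have e2 : (b : ZMod N) - a = ((-(a - b) : ℤ) : ZMod N) := by push_cast; ring
  rw [e1, e2]; exact hm

lemma adj_iff (a b : ℤ) (h : (a - b).natAbs < N) :
    (circulant N k).Adj a b ↔
      a ≠ b ∧ ((a - b).natAbs ≤ k / 2 ∨ N - k / 2 ≤ (a - b).natAbs) := by
  rw [circulant_adj, circDist_cast a b h]
  omega

end CircAux

section CircAux2
open Finset

variable {N k : ℕ} [NeZero N]

/-- index set of neighbors of 0 -/
noncomputable def Ifin (m : ℕ) : Finset ℤ := (Finset.Icc (-(m : ℤ)) m).erase 0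

lemma mem_Ifin {m : ℕ} {a : ℤ} : a ∈ Ifin m ↔ a ≠ 0 ∧ -(m:ℤ) ≤ a ∧ a ≤ m := by
  simp [Ifin, Finset.mem_erase, Finset.mem_Icc, and_assoc]

lemma adj_zero (hN : k < N) (x : ZMod N) :
    (circulant N k).Adj 0 x ↔ ∃ a ∈ Ifin (k / 2), (a : ZMod N) = x := by
  constructor
  · intro h
    have hx0 : x ≠ 0 := by
      rintro rfl; exact (circulant N k).loopless.irrefl 0 h
    rw [circulant_adj] at h
    have ht : x.val < N := x.val_lt
    have hneg : (-x).val = N - x.val := by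
      have : NeZero x := ⟨hx0⟩
      exact ZMod.val_neg_of_ne_zero x
    have hcd : circDist 0 x = min (N - x.val) x.val := by
      unfold circDist
      rw [zero_sub, sub_zero, hneg]
    rw [hcd] at h
    have hvx : ((x.val : ℤ) : ZMod N) = x := by
      push_cast [ZMod.natCast_val, ZMod.cast_id]
      rfl
    rcases le_or_gt x.val (k / 2) with hc | hc
    · exact ⟨(x.val : ℤ), mem_Ifin.2 (by omega), hvx⟩
    · refine ⟨(x.val : ℤ) - N, mem_Ifin.2 (by omega), ?_⟩
      push_cast
      simp [hvx]
  · rintro ⟨a, ha, rfl⟩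
    rw [mem_Ifin] at ha
    have h : ((0:ℤ) - a).natAbs < N := by omega
    rw [show (0 : ZMod N) = ((0:ℤ) : ZMod N) by simp, adj_iff 0 a h]
    omega

lemma cast_injOn (hN : k < N) :
    Set.InjOn (fun a : ℤ => (a : ZMod N)) (Ifin (k / 2)) := by
  intro a ha b hb hab
  have ha' := mem_Ifin.1 (Finset.mem_coe.1 ha)
  have hb' := mem_Ifin.1 (Finset.mem_coe.1 hb)
  have hab' : (a : ZMod N) = (b : ZMod N) := hab
  have h0 : ((a - b : ℤ) : ZMod N) = 0 := by
    push_cast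
    rw [sub_eq_zero]
    exact hab'
  rw [ZMod.intCast_zmod_eq_zero_iff_dvd] at h0
  have h2 : (N : ℕ) ∣ (a - b).natAbs := Int.natAbs_dvd_natAbs.2 h0
  have h3 := Nat.eq_zero_of_dvd_of_lt h2 (by omega)
  omega

lemma neighbor_filter_eq (hN : k < N) :
    Finset.univ.filter ((circulant N k).Adj 0) =
      (Ifin (k / 2)).image (fun a : ℤ => (a : ZMod N)) := by
  ext x
  simp [adj_zero hN]

lemma Ifin_card (m : ℕ) : (Ifin m).card = 2 * m := by
  rw [Ifin, Finset.card_erase_of_mem (by simp), Int.card_Icc]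
  omega

lemma degree_zero (hke : Even k) (hN : k < N) : (circulant N k).degree 0 = k := by
  rw [← SimpleGraph.card_neighborFinset_eq_degree, SimpleGraph.neighborFinset_eq_filter,
    neighbor_filter_eq hN, Finset.card_image_of_injOn (cast_injOn hN), Ifin_card]
  have := Nat.even_iff.mp hke
  omega

end CircAux2

/-- Number of edges among the neighbors of `v`. -/
noncomputable def nbrEdges {V : Type*} [Fintype V] (G : SimpleGraph V) (v : V) : ℕ :=
  (Finset.univ.filter fun p : V × V => G.Adj v p.1 ∧ G.Adj v p.2 ∧ G.Adj p.1 p.2).card / 2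

/-- Local clustering coefficient of a vertex. -/
noncomputable def localClustering {V : Type*} [Fintype V] (G : SimpleGraph V) (v : V) : ℚ :=
  (nbrEdges G v : ℚ) / ((G.degree v).choose 2 : ℚ)

/-- (Average) clustering coefficient of a graph. -/
noncomputable def clusteringCoeff {V : Type*} [Fintype V] (G : SimpleGraph V) : ℚ :=
  (∑ v, localClustering G v) / (Fintype.card V : ℚ)

section CircAux3
variable {N k : ℕ} [NeZero N]

lemma adj_sub (v x y : ZMod N) :
    (circulant N k).Adj (x - v) (y - v) ↔ (circulant N k).Adj x y := by
  rw [circulant_adj, circulant_adj]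
  have e1 : (x - v) - (y - v) = x - y := by ring
  have e2 : (y - v) - (x - v) = y - x := by ring
  unfold circDist
  rw [e1, e2]

lemma degree_shift (v : ZMod N) :
    (circulant N k).degree v = (circulant N k).degree 0 := by
  rw [← SimpleGraph.card_neighborFinset_eq_degree, ← SimpleGraph.card_neighborFinset_eq_degree,
    SimpleGraph.neighborFinset_eq_filter, SimpleGraph.neighborFinset_eq_filter]
  apply Finset.card_bij' (fun x _ => x - v) (fun x _ => x + v)
  · intro x hx
    simp only [Finset.mem_filter, Finset.mem_univ, true_and] at *
    have := (adj_sub (N := N) (k := k) v v x).2 hx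
    simpa using this
  · intro x hx
    simp only [Finset.mem_filter, Finset.mem_univ, true_and] at *
    have := (adj_sub (N := N) (k := k) (-v) 0 x).2 hx
    simpa [sub_neg_eq_add] using this
  · intro x _; ring
  · intro x _; ring

lemma nbrEdges_shift (v : ZMod N) :
    nbrEdges (circulant N k) v = nbrEdges (circulant N k) 0 := by
  unfold nbrEdges
  congr 1
  apply Finset.card_bij' (fun p _ => (p.1 - v, p.2 - v)) (fun p _ => (p.1 + v, p.2 + v))
  · intro p hp
    simp only [Finset.mem_filter, Finset.mem_univ, true_and] at *
    obtain ⟨h1, h2, h3⟩ := hp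
    refine ⟨?_, ?_, (adj_sub v _ _).2 h3⟩
    · have := (adj_sub (N := N) (k := k) v v p.1).2 h1; simpa using this
    · have := (adj_sub (N := N) (k := k) v v p.2).2 h2; simpa using this
  · intro p hp
    simp only [Finset.mem_filter, Finset.mem_univ, true_and] at *
    obtain ⟨h1, h2, h3⟩ := hp
    refine ⟨?_, ?_, ?_⟩
    · have := (adj_sub (N := N) (k := k) (-v) 0 p.1).2 h1
      simpa [sub_neg_eq_add] using this
    · have := (adj_sub (N := N) (k := k) (-v) 0 p.2).2 h2
      simpa [sub_neg_eq_add] using this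
    · have := (adj_sub (N := N) (k := k) (-v) p.1 p.2).2 h3
      simpa [sub_neg_eq_add] using this
  · intro p _; ext <;> simp <;> ring
  · intro p _; ext <;> simp <;> ring

lemma localClustering_shift (v : ZMod N) :
    localClustering (circulant N k) v = localClustering (circulant N k) 0 := by
  unfold localClustering
  rw [degree_shift, nbrEdges_shift]

end CircAux3

section CircAux4
open Finset

variable {N k : ℕ} [NeZero N]

lemma card_filter_product {α β : Type*} (s : Finset α) (t : Finset β) (P : α × β → Prop)
    [DecidablePred P] :
    ((s ×ˢ t).filter P).card = ∑ a ∈ s, (t.filter fun b => P (a, b)).card := by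
  rw [Finset.card_filter, Finset.sum_product]; simp only [Finset.card_filter]

lemma gauss_Ioc (n : ℕ) : 2 * ∑ i ∈ Finset.Ioc 0 n, i = n * (n + 1) := by
  induction n with
  | zero => simp
  | succ n ih =>
    rw [Finset.sum_Ioc_succ_top (Nat.zero_le _), mul_add, ih]
    ring

lemma fiber_card (r : ℕ) (a : ℤ) (ha : a ∈ Ifin (k / 2)) :
    ((Ifin (k / 2)).filter fun b =>
        k / 2 + 1 ≤ (a - b).natAbs ∧ (a - b).natAbs ≤ k / 2 + r).card
      = min a.natAbs r := by
  rw [mem_Ifin] at ha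
  set m := k / 2 with hm
  rcases lt_or_gt_of_ne ha.1 with hneg | hpos
  · have hset : ((Ifin m).filter fun b =>
        m + 1 ≤ (a - b).natAbs ∧ (a - b).natAbs ≤ m + r)
        = Finset.Icc (a + m + 1) (min (m : ℤ) (a + m + r)) := by
      ext b
      simp only [Finset.mem_filter, mem_Ifin, Finset.mem_Icc]
      omega
    rw [hset, Int.card_Icc]
    omega
  · have hset : ((Ifin m).filter fun b =>
        m + 1 ≤ (a - b).natAbs ∧ (a - b).natAbs ≤ m + r)
        = Finset.Icc (max (-(m : ℤ)) (a - m - r)) (a - m - 1) := by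
      ext b
      simp only [Finset.mem_filter, mem_Ifin, Finset.mem_Icc]
      omega
    rw [hset, Int.card_Icc]
    omega

lemma Ifin_eq_union (m : ℕ) :
    Ifin m = (Finset.Icc 1 m).image (fun i : ℕ => (i : ℤ))
      ∪ (Finset.Icc 1 m).image (fun i : ℕ => -(i : ℤ)) := by
  ext a
  simp only [mem_Ifin, Finset.mem_union, Finset.mem_image, Finset.mem_Icc]
  constructor
  · intro ⟨h0, h1, h2⟩
    rcases le_or_gt 0 a with h | h
    · exact Or.inl ⟨a.toNat, by omega, by omega⟩
    · exact Or.inr ⟨(-a).toNat, by omega, by omega⟩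
  · rintro (⟨i, hi, rfl⟩ | ⟨i, hi, rfl⟩) <;> omega

lemma sum_Ifin_min (m r : ℕ) (hrm : r ≤ m) :
    ∑ a ∈ Ifin m, min a.natAbs r = r * (r + 1) + 2 * ((m - r) * r) := by
  have hdisj : Disjoint ((Finset.Icc 1 m).image (fun i : ℕ => (i : ℤ)))
      ((Finset.Icc 1 m).image (fun i : ℕ => -(i : ℤ))) := by
    rw [Finset.disjoint_left]
    intro a h1 h2
    simp only [Finset.mem_image, Finset.mem_Icc] at h1 h2
    obtain ⟨i, hi, rfl⟩ := h1
    obtain ⟨j, hj, hja⟩ := h2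
    omega
  rw [Ifin_eq_union, Finset.sum_union hdisj,
    Finset.sum_image (by intro x _ y _ h; simp only [Nat.cast_inj] at h; omega),
    Finset.sum_image (by intro x _ y _ h; simp only [neg_inj, Nat.cast_inj] at h; omega)]
  rw [Finset.sum_congr rfl (fun i _ => by simp : ∀ i ∈ Finset.Icc 1 m,
      min (Int.natAbs i) r = min i r),
    Finset.sum_congr rfl (fun i _ => by simp : ∀ i ∈ Finset.Icc 1 m,
      min (Int.natAbs (-(i:ℤ))) r = min i r)]
  have hs : Finset.Icc 1 m = Finset.Ioc 0 m := by rw [← Finset.Icc_add_one_left_eq_Ioc]; rfl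
  rw [hs, ← Finset.sum_Ioc_consecutive _ (Nat.zero_le r) hrm]
  have h1 : ∑ i ∈ Finset.Ioc 0 r, min i r = ∑ i ∈ Finset.Ioc 0 r, i :=
    Finset.sum_congr rfl (fun i hi => by simp only [Finset.mem_Ioc] at hi; omega)
  have h2 : ∑ i ∈ Finset.Ioc r m, min i r = (m - r) * r := by
    rw [Finset.sum_congr rfl (fun i hi => by simp only [Finset.mem_Ioc] at hi; omega :
      ∀ i ∈ Finset.Ioc r m, min i r = r), Finset.sum_const, Nat.card_Ioc, smul_eq_mul]
  have h3 := gauss_Ioc r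
  omega

end CircAux4

section CircAux5
open Finset

variable {N k : ℕ} [NeZero N]

lemma nbrEdges_val (hke : Even k) (hk4 : 4 ≤ k) (hN : k < N) (r : ℕ)
    (hr : r = min (N - k - 1) (k / 2)) :
    (nbrEdges (circulant N k) 0 : ℚ) =
      (k.choose 2 : ℚ) - k * r / 2 + r * (r - 1) / 2 := by
  have hk2 : k = 2 * (k / 2) := by have := Nat.even_iff.mp hke; omega
  set m := k / 2 with hm
  have hrm : r ≤ m := by omega
  set G := circulant N k with hG
  set A := Finset.univ.filter fun p : ZMod N × ZMod N =>
      G.Adj 0 p.1 ∧ G.Adj 0 p.2 ∧ G.Adj p.1 p.2 with hA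
  set Q : ℤ × ℤ → Prop := fun q => q.1 ≠ q.2 ∧
      ((q.1 - q.2).natAbs ≤ m ∨ N - m ≤ (q.1 - q.2).natAbs) with hQ
  set R : ℤ × ℤ → Prop := fun q =>
      m + 1 ≤ (q.1 - q.2).natAbs ∧ (q.1 - q.2).natAbs ≤ m + r with hR
  have hbound : ∀ a ∈ Ifin m, ∀ b ∈ Ifin m, (a - b).natAbs < N := by
    intro a ha b hb; rw [mem_Ifin] at ha hb; omega
  -- step 1 : transfer the count to ℤ
  have hcardAB : A.card = ((Ifin m ×ˢ Ifin m).filter Q).card := by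
    symm
    apply Finset.card_bij (fun q _ => ((q.1 : ZMod N), (q.2 : ZMod N)))
    · intro q hq
      simp only [Finset.mem_filter, Finset.mem_product] at hq
      obtain ⟨⟨h1, h2⟩, hq⟩ := hq
      rw [hA, Finset.mem_filter]
      refine ⟨Finset.mem_univ _, ?_, ?_, ?_⟩
      · exact (adj_zero hN _).2 ⟨q.1, h1, rfl⟩
      · exact (adj_zero hN _).2 ⟨q.2, h2, rfl⟩
      · exact (adj_iff q.1 q.2 (hbound _ h1 _ h2)).2 hq
    · intro q hq q' hq' heq
      simp only [Finset.mem_filter, Finset.mem_product] at hq hq'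
      have e1 : ((q.1 : ℤ) : ZMod N) = ((q'.1 : ℤ) : ZMod N) := congrArg Prod.fst heq
      have e2 : ((q.2 : ℤ) : ZMod N) = ((q'.2 : ℤ) : ZMod N) := congrArg Prod.snd heq
      exact Prod.ext
        (cast_injOn hN (Finset.mem_coe.2 hq.1.1) (Finset.mem_coe.2 hq'.1.1) e1)
        (cast_injOn hN (Finset.mem_coe.2 hq.1.2) (Finset.mem_coe.2 hq'.1.2) e2)
    · intro p hp
      rw [hA, Finset.mem_filter] at hp
      obtain ⟨-, h1, h2, h3⟩ := hp
      obtain ⟨a, ha, hae⟩ := (adj_zero hN p.1).1 h1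
      obtain ⟨b, hb, hbe⟩ := (adj_zero hN p.2).1 h2
      refine ⟨(a, b), Finset.mem_filter.2 ⟨Finset.mem_product.2 ⟨ha, hb⟩, ?_⟩, ?_⟩
      · apply (adj_iff a b (hbound _ ha _ hb)).1
        rw [hae, hbe]; exact h3
      · exact Prod.ext hae hbe
  -- step 2 : partition of the square
  have hpart := Finset.card_filter_add_card_filter_not
    (s := Ifin m ×ˢ Ifin m) (p := Q)
  have hrw : (Ifin m ×ˢ Ifin m).filter (fun q => ¬ Q q)
      = ((Ifin m ×ˢ Ifin m).filter fun q => q.1 = q.2)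
        ∪ ((Ifin m ×ˢ Ifin m).filter R) := by
    rw [← Finset.filter_or]
    apply Finset.filter_congr
    intro q hq
    simp only [Finset.mem_product, mem_Ifin] at hq
    simp only [hQ, hR]
    omega
  have hdisj2 : Disjoint ((Ifin m ×ˢ Ifin m).filter fun q : ℤ × ℤ => q.1 = q.2)
      ((Ifin m ×ˢ Ifin m).filter R) := by
    rw [Finset.disjoint_left]
    intro q h1 h2
    simp only [Finset.mem_filter, hR] at h1 h2
    omega
  have hdiag : ((Ifin m ×ˢ Ifin m).filter fun q : ℤ × ℤ => q.1 = q.2).card = 2 * m := by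
    rw [show ((Ifin m ×ˢ Ifin m).filter fun q : ℤ × ℤ => q.1 = q.2) = (Ifin m).diag by
      ext p
      simp only [Finset.mem_diag, Finset.mem_filter, Finset.mem_product]
      constructor
      · rintro ⟨⟨u1, _⟩, u3⟩; exact ⟨u1, u3⟩
      · rintro ⟨u1, u3⟩; exact ⟨⟨u1, u3 ▸ u1⟩, u3⟩]
    rw [Finset.diag_card, Ifin_card]
  -- step 3 : count the non-adjacent pairs
  have hcardC : ((Ifin m ×ˢ Ifin m).filter R).card = r * (r + 1) + 2 * ((m - r) * r) := by
    rw [card_filter_product]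
    rw [Finset.sum_congr rfl (fun a ha => by
      simpa only [hR] using fiber_card (k := k) r a ha :
      ∀ a ∈ Ifin m, ((Ifin m).filter fun b => R (a, b)).card = min a.natAbs r)]
    exact sum_Ifin_min m r hrm
  -- assemble
  rw [Finset.card_product, Ifin_card, hrw, Finset.card_union_of_disjoint hdisj2,
    hdiag, hcardC, ← hcardAB] at hpart
  -- A.card is even
  have heven : Even A.card := by
    have h1 : Even (A.card + (2 * m + (r * (r + 1) + 2 * ((m - r) * r)))) := by
      rw [hpart]
      exact ⟨m * (2 * m), by ring⟩
    have h2 : Even (2 * m + (r * (r + 1) + 2 * ((m - r) * r))) := by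
      refine Even.add ⟨m, by ring⟩ (Even.add (Nat.even_mul_succ_self r) ⟨(m - r) * r, by ring⟩)
    rw [Nat.even_add] at h1
    tauto
  obtain ⟨c, hc⟩ := heven
  have hnb : nbrEdges G 0 = c := by
    have : nbrEdges G 0 = A.card / 2 := rfl
    omega
  -- cast to ℚ
  have hcardsQ : (A.card : ℚ) + (2 * m + (r * (r + 1) + 2 * ((m - r : ℕ) * r))) =
      (2 * m) * (2 * m) := by exact_mod_cast hpart
  have hsubQ : ((m - r : ℕ) : ℚ) = (m : ℚ) - r := by
    have := Nat.cast_sub (R := ℚ) hrm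
    exact_mod_cast this
  have hcQ : (A.card : ℚ) = c + c := by exact_mod_cast hc
  have hchoose : (k.choose 2 : ℚ) = k * (k - 1) / 2 := by
    rw [Nat.choose_two_right]
    have h2 : 2 ∣ k * (k - 1) := (Nat.even_mul_pred_self k).two_dvd
    rw [Nat.cast_div h2 (by norm_num)]
    congr 1
    rw [Nat.cast_mul, Nat.cast_sub (by omega)]
    norm_num
  have hkQ : (k : ℚ) = 2 * m := by exact_mod_cast hk2
  rw [hnb, hchoose, hkQ]
  rw [hsubQ] at hcardsQ
  rw [hcQ] at hcardsQ
  push_cast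
  linear_combination hcardsQ / 2

end CircAux5

theorem stmt3 (N k : ℕ) [NeZero N] (hke : Even k) (hk4 : 4 ≤ k) (hN : k < N)
    (r : ℕ) (hr : r = min (N - k - 1) (k / 2)) :
    clusteringCoeff (circulant N k) =
      ((k.choose 2 : ℚ) - k * r / 2 + r * (r - 1) / 2) / (k.choose 2 : ℚ) := by
  unfold clusteringCoeff
  rw [Finset.sum_congr rfl (fun v _ => localClustering_shift v),
    Finset.sum_const, Finset.card_univ, ZMod.card, nsmul_eq_mul]
  have hN0 : (N : ℚ) ≠ 0 := Nat.cast_ne_zero.2 (NeZero.ne N)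
  rw [mul_comm, mul_div_assoc, div_self hN0, mul_one]
  unfold localClustering
  rw [degree_zero hke hN, nbrEdges_val hke hk4 hN r hr]
end

section
/- Let k ≥ 4 be even, N > k, and 1 < m ≤ k/2 + 1. Let r = min(N-k-1, k/2) and A = C(k,2) - kr/2 + r(r-1)/2. The Type II generalized circulant graph D_{N,k,m}, obtained from C_{N,k} by adding one central vertex joined to m consecutive vertices of the cycle, has clustering coefficient equal to ((N-m)·A/C(k,2) + m·(A+m-1)/C(k+1,2) + 1)/(N+1). -/
open scoped Classical

/-- Add a central vertex (the `none` vertex) adjacent to the set `S` of vertices of `G`. -/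
def cone {V : Type*} (G : SimpleGraph V) (S : Set V) : SimpleGraph (Option V) where
  Adj a b :=
    (∃ i j, a = some i ∧ b = some j ∧ G.Adj i j) ∨
    (∃ i ∈ S, (a = none ∧ b = some i) ∨ (b = none ∧ a = some i))
  symm := ⟨by
    rintro a b (⟨i, j, rfl, rfl, h⟩ | ⟨i, hi, h⟩)
    · exact Or.inl ⟨j, i, rfl, rfl, h.symm⟩
    · exact Or.inr ⟨i, hi, h.symm⟩⟩
  loopless := ⟨by
    rintro a (⟨i, j, rfl, h2, h⟩ | ⟨i, hi, ⟨h1, h2⟩ | ⟨h1, h2⟩⟩)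
    · cases h2; exact G.irrefl h
    · subst h1; simp at h2
    · subst h1; simp at h2⟩

/-- Type II generalized circulant graph `D_{N,k,m}`: a central vertex joined to
`m` consecutive vertices of the circulant graph `C_{N,k}`. -/
def typeII (N k m : ℕ) : SimpleGraph (Option (ZMod N)) :=
  cone (circulant N k) {v : ZMod N | v.val < m}

open Finset

lemma circDist_comm {N : ℕ} (i j : ZMod N) : circDist i j = circDist j i := min_comm _ _

lemma emod_eq_if {N : ℕ} (hN : 0 < (N:ℤ)) (e : ℤ) (hlb : -(N:ℤ) < e) (hub : e < N) :
    e % (N:ℤ) = if 0 ≤ e then e else e + N := by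
  split
  · exact Int.emod_eq_of_lt (by assumption) hub
  · have h1 : (e + N) % (N:ℤ) = e % N := by
      simpa using Int.add_mul_emod_self_left (a := e) (b := (N:ℤ)) (c := 1)
    rw [← h1]
    exact Int.emod_eq_of_lt (by omega) (by omega)

lemma circDist_cast_s10 {N : ℕ} [NeZero N] (e : ℤ) (he : e.natAbs < N) :
    circDist ((e : ZMod N)) 0 = min e.natAbs (N - e.natAbs) := by
  have hN0 : 0 < (N:ℤ) := by exact_mod_cast (NeZero.pos N)
  have h1 : ((((e : ZMod N)) - 0).val : ℤ) = e % N := by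
    rw [sub_zero]; exact ZMod.val_intCast e
  have h2 : (((0 : ZMod N) - e).val : ℤ) = (-e) % N := by
    rw [zero_sub, ← Int.cast_neg]; exact ZMod.val_intCast (-e)
  have m1 : e % (N:ℤ) = if 0 ≤ e then e else e + N := emod_eq_if hN0 e (by omega) (by omega)
  have m2 : (-e) % (N:ℤ) = if 0 ≤ -e then -e else -e + N := emod_eq_if hN0 (-e) (by omega) (by omega)
  unfold circDist
  omega

lemma circDist_sub {N : ℕ} (i j : ZMod N) : circDist i j = circDist (i - j) 0 := by
  unfold circDist
  rw [sub_zero, zero_sub, neg_sub]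

lemma circDist_translate {N : ℕ} (i j v : ZMod N) : circDist (i - v) (j - v) = circDist i j := by
  rw [circDist_sub, circDist_sub i j, show i - v - (j - v) = i - j by ring]

lemma intCast_injOn_Icc {N : ℕ} [NeZero N] {h : ℕ} (hN : 2*h < N) (d1 d2 : ℤ)
    (h1 : d1.natAbs ≤ h) (h2 : d2.natAbs ≤ h) (he : (d1 : ZMod N) = (d2 : ZMod N)) :
    d1 = d2 := by
  have hm := (ZMod.intCast_eq_intCast_iff d1 d2 N).1 he
  have hd : (N:ℤ) ∣ d2 - d1 := Int.ModEq.dvd hm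
  have : d2 - d1 = 0 :=
    Int.eq_zero_of_dvd_of_natAbs_lt_natAbs hd (by omega)
  omega

lemma adj_cast {N h : ℕ} [NeZero N] (hN : 2*h < N) (d1 d2 : ℤ)
    (h1 : d1.natAbs ≤ h) (h2 : d2.natAbs ≤ h) :
    (circulant N (2*h)).Adj (d1 : ZMod N) (d2 : ZMod N) ↔
      d1 ≠ d2 ∧ ((d1 - d2).natAbs ≤ h ∨ N ≤ (d1 - d2).natAbs + h) := by
  have hcd : circDist ((d1 : ZMod N)) ((d2 : ZMod N))
      = min (d1 - d2).natAbs (N - (d1 - d2).natAbs) := by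
    rw [circDist_sub, show ((d1 : ZMod N) - d2) = ((d1 - d2 : ℤ) : ZMod N) by push_cast; ring]
    exact circDist_cast_s10 _ (by omega)
  show (1 ≤ _ ∧ _ ≤ 2*h/2) ↔ _
  rw [hcd, show 2*h/2 = h by omega]
  constructor
  · rintro ⟨ha, hb⟩
    refine ⟨fun heq => by subst heq; simp at ha, by omega⟩
  · rintro ⟨hne, hor⟩
    have : d1 - d2 ≠ 0 := sub_ne_zero.2 hne
    omega

lemma adj_zero_iff {N h : ℕ} [NeZero N] (hN : 2*h < N) (i : ZMod N) :
    (circulant N (2*h)).Adj 0 i ↔ ∃ d ∈ (Finset.Icc (-(h:ℤ)) h).erase 0, (d : ZMod N) = i := by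
  have hiv : ((i.val : ℤ) : ZMod N) = i := by
    have h0 : ((i.val : ℕ) : ZMod N) = i := ZMod.natCast_rightInverse i
    exact_mod_cast h0
  have hvlt : i.val < N := ZMod.val_lt i
  have hcd : circDist 0 i = min i.val (N - i.val) := by
    have hc2 := circDist_cast_s10 (N := N) ((i.val : ℤ)) (by rwa [Int.natAbs_natCast])
    rw [hiv, Int.natAbs_natCast] at hc2
    rw [circDist_comm]
    exact hc2
  constructor
  · rintro ⟨ha, hb⟩
    rw [show (2*h)/2 = h by omega] at hb
    rw [hcd] at ha hb
    by_cases hc : i.val ≤ h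
    · refine ⟨(i.val : ℤ), ?_, hiv⟩
      simp only [mem_erase, mem_Icc]
      omega
    · refine ⟨(i.val : ℤ) - N, ?_, ?_⟩
      · simp only [mem_erase, mem_Icc]; omega
      · have hNz : ((N:ℤ) : ZMod N) = 0 := by exact_mod_cast ZMod.natCast_self N
        push_cast [ZMod.natCast_self]
        simpa using hiv
  · rintro ⟨d, hd, rfl⟩
    simp only [mem_erase, mem_Icc] at hd
    constructor
    · rw [circDist_comm, circDist_cast_s10 d (by omega)]
      omega
    · rw [show (2*h)/2 = h by omega, circDist_comm, circDist_cast_s10 d (by omega)]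
      omega

section
variable {N h : ℕ}

/-- The index set of neighbors of `0`. -/
noncomputable def Dset (h : ℕ) : Finset ℤ := (Finset.Icc (-(h:ℤ)) h).erase 0

/-- Adjacency predicate on indices. -/
def ppred (N h : ℕ) (p : ℤ × ℤ) : Prop :=
  p.1 ≠ p.2 ∧ ((p.1 - p.2).natAbs ≤ h ∨ N ≤ (p.1 - p.2).natAbs + h)

lemma fiber_card_s10 (hN : 2*h < N) (a : ℤ) (ha : a ∈ Icc (1:ℤ) (h:ℤ)) :
    ((Dset h).filter fun b => ppred N h (a, b)).card
      = (2*h - 1 - a.toNat) + (a.toNat + (2*h+1) - N) := by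
  simp only [mem_Icc] at ha
  have hset : ((Dset h).filter fun b => ppred N h (a, b))
      = (((Icc (a - h) (h:ℤ)).erase 0).erase a) ∪ Icc (-(h:ℤ)) (a + h - N) := by
    ext b
    rw [Finset.mem_filter]
    simp only [Dset, ppred, mem_filter, mem_erase, mem_Icc, mem_union]
    omega
  have hdisj : Disjoint ((((Icc (a - h) (h:ℤ)).erase 0).erase a)) (Icc (-(h:ℤ)) (a + h - N)) := by
    simp only [disjoint_left, mem_erase, mem_Icc]
    omega
  rw [hset, card_union_of_disjoint hdisj,
    card_erase_of_mem (by simp only [mem_erase, mem_Icc]; omega),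
    card_erase_of_mem (by simp only [mem_Icc]; omega),
    Int.card_Icc, Int.card_Icc]
  omega

lemma Fpos_card (hN : 2*h < N) :
    (((Icc (1:ℤ) (h:ℤ)) ×ˢ Dset h).filter (ppred N h)).card
      = ∑ a ∈ Icc (1:ℤ) (h:ℤ), ((2*h - 1 - a.toNat) + (a.toNat + (2*h+1) - N)) := by
  rw [card_filter, sum_product]
  refine sum_congr rfl fun a ha => ?_
  rw [show (∑ y ∈ Dset h, if ppred N h (a, y) then 1 else 0)
      = ((Dset h).filter fun b => ppred N h (a, b)).card from (card_filter _ _).symm]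
  exact fiber_card_s10 hN a ha

lemma sum_eval (hN : 2*h < N) :
    ∑ a ∈ Icc (1:ℤ) (h:ℤ), ((2*h - 1 - a.toNat) + (a.toNat + (2*h+1) - N))
      = 3 * (∑ i ∈ range h, i) + (∑ i ∈ range ((3*h+1-N)+1), i) := by
  -- transfer to a sum over `range h`
  have step1 : ∑ a ∈ Icc (1:ℤ) (h:ℤ), ((2*h - 1 - a.toNat) + (a.toNat + (2*h+1) - N))
      = ∑ i ∈ range h, ((2*h - 1 - (i+1)) + ((i+1) + (2*h+1) - N)) := by
    refine Finset.sum_nbij' (fun a => a.toNat - 1) (fun i => (i:ℤ) + 1) ?_ ?_ ?_ ?_ ?_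
    · intro a ha; simp only [mem_Icc] at ha; simp only [mem_range]; omega
    · intro i hi; simp only [mem_range] at hi; simp only [mem_Icc]; omega
    · intro a ha; simp only [mem_Icc] at ha; omega
    · intro i hi; simp only [mem_range] at hi; omega
    · intro a ha; simp only [mem_Icc] at ha; omega
  rw [step1]
  have e1 : (∑ i ∈ range h, ((2*h - 1 - (i+1)) + ((i+1) + (2*h+1) - N)))
      = (∑ i ∈ range h, (2*h - 2 - i)) + (∑ i ∈ range h, ((i+1) + (2*h+1) - N)) := by
    rw [← sum_add_distrib]
    refine sum_congr rfl fun i hi => ?_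
    simp only [mem_range] at hi
    omega
  rw [e1]
  congr 1
  · -- first sum: ∑ i<h, (2h-2-i) = 3 * ∑ i<h, i
    have refl1 : ∑ i ∈ range h, (2*h - 2 - (h - 1 - i)) = ∑ i ∈ range h, (2*h - 2 - i) :=
      Finset.sum_range_reflect (fun i => 2*h - 2 - i) h
    rw [← refl1]
    have hc : ∀ i ∈ range h, 2*h - 2 - (h - 1 - i) = (h - 1) + i := by
      intro i hi; simp only [mem_range] at hi; omega
    rw [sum_congr rfl hc, sum_add_distrib, sum_const, card_range, smul_eq_mul]
    have := Finset.sum_range_id_mul_two h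
    omega
  · -- second sum
    set q := 3*h+1-N with hq
    have hqh : q ≤ h := by omega
    have r0 : ∑ i ∈ range h, ((i+1) + (2*h+1) - N) = ∑ i ∈ range h, (q - i) := by
      rw [← Finset.sum_range_reflect (fun i => (i+1) + (2*h+1) - N) h]
      refine sum_congr rfl fun i hi => ?_
      simp only [mem_range] at hi
      omega
    rw [r0]
    have sub1 : ∑ i ∈ range h, (q - i) = ∑ i ∈ range q, (q - i) := by
      refine (Finset.sum_subset (range_subset_range.2 hqh) ?_).symm
      intro i _ hi; simp only [mem_range] at hi; omega
    rw [sub1]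
    have refl2 : ∑ i ∈ range q, (q - (q - 1 - i)) = ∑ i ∈ range q, (q - i) :=
      Finset.sum_range_reflect (fun i => q - i) q
    rw [← refl2]
    have hc2 : ∀ i ∈ range q, q - (q - 1 - i) = i + 1 := by
      intro i hi; simp only [mem_range] at hi; omega
    rw [sum_congr rfl hc2, Finset.sum_range_succ' (fun i => i) q]
    simp

lemma F_card (hN : 2*h < N) :
    (((Dset h) ×ˢ (Dset h)).filter (ppred N h)).card
      = 6 * (∑ i ∈ range h, i) + 2 * (∑ i ∈ range ((3*h+1-N)+1), i) := by
  set F := ((Dset h) ×ˢ (Dset h)).filter (ppred N h) with hF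
  have hsplit : (F.filter fun p => 0 < p.1).card + (F.filter fun p => ¬ 0 < p.1).card = F.card :=
    Finset.card_filter_add_card_filter_not _
  have hneg : (F.filter fun p => ¬ 0 < p.1).card = (F.filter fun p => 0 < p.1).card := by
    refine Finset.card_nbij (fun p => (-p.1, -p.2)) ?_ ?_ ?_
    · intro p hp
      simp only [hF, Dset, ppred, mem_coe, mem_filter, mem_product, mem_erase, mem_Icc] at hp ⊢
      omega
    · intro p hp q hq hpq
      simp only [Prod.ext_iff] at hpq ⊢
      omega
    · intro p hp
      simp only [Set.mem_image, mem_coe]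
      refine ⟨(-p.1, -p.2), ?_, by simp⟩
      simp only [hF, Dset, ppred, mem_coe, mem_filter, mem_product, mem_erase, mem_Icc] at hp ⊢
      omega
  have hpos : (F.filter fun p => 0 < p.1) = ((Icc (1:ℤ) (h:ℤ)) ×ˢ Dset h).filter (ppred N h) := by
    ext p
    simp only [hF, Dset, ppred, mem_filter, mem_product, mem_erase, mem_Icc]
    omega
  have := Fpos_card hN
  rw [← hsplit, hneg, hpos, Fpos_card hN, sum_eval hN]
  ring

end

/-- the ordered pair count for a vertex. -/
noncomputable def pairCount {V : Type*} [Fintype V] (G : SimpleGraph V) (v : V) : ℕ :=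
  (Finset.univ.filter fun p : V × V => G.Adj v p.1 ∧ G.Adj v p.2 ∧ G.Adj p.1 p.2).card

lemma adj_translate {N k : ℕ} (i j v : ZMod N) :
    (circulant N k).Adj (i - v) (j - v) ↔ (circulant N k).Adj i j := by
  show (1 ≤ circDist _ _ ∧ _) ↔ _
  rw [circDist_translate]
  exact Iff.rfl

lemma adj_translate' {N k : ℕ} (v p : ZMod N) :
    (circulant N k).Adj v p ↔ (circulant N k).Adj 0 (p - v) := by
  rw [show (0 : ZMod N) = v - v by ring, adj_translate]

lemma pairCount_zero {N h : ℕ} [NeZero N] (hN : 2*h < N) :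
    pairCount (circulant N (2*h)) 0
      = 6 * (∑ i ∈ range h, i) + 2 * (∑ i ∈ range ((3*h+1-N)+1), i) := by
  rw [← F_card hN]
  unfold pairCount
  refine Finset.card_nbij (fun p => ((p.1 : ZMod N), (p.2 : ZMod N))) ?_ ?_ ?_ |>.symm
  · intro p hp
    simp only [Dset, ppred, mem_coe, mem_filter, mem_product, mem_erase, mem_Icc] at hp
    obtain ⟨⟨⟨h10, h1l, h1u⟩, ⟨h20, h2l, h2u⟩⟩, hne, habs⟩ := hp
    simp only [mem_coe, mem_filter, mem_univ, true_and]
    refine ⟨?_, ?_, ?_⟩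
    · exact (adj_zero_iff hN _).2 ⟨p.1, by simp only [mem_erase, mem_Icc]; omega, rfl⟩
    · exact (adj_zero_iff hN _).2 ⟨p.2, by simp only [mem_erase, mem_Icc]; omega, rfl⟩
    · exact (adj_cast hN p.1 p.2 (by omega) (by omega)).2 ⟨hne, habs⟩
  · intro p hp q hq hpq
    simp only [Dset, ppred, mem_coe, mem_filter, mem_product, mem_erase, mem_Icc] at hp hq
    simp only [Prod.ext_iff] at hpq ⊢
    obtain ⟨e1, e2⟩ := hpq
    exact ⟨intCast_injOn_Icc hN _ _ (by omega) (by omega) e1,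
           intCast_injOn_Icc hN _ _ (by omega) (by omega) e2⟩
  · intro p hp
    simp only [mem_coe, mem_filter, mem_univ, true_and] at hp
    obtain ⟨ha1, ha2, ha3⟩ := hp
    obtain ⟨d1, hd1, he1⟩ := (adj_zero_iff hN _).1 ha1
    obtain ⟨d2, hd2, he2⟩ := (adj_zero_iff hN _).1 ha2
    simp only [mem_erase, mem_Icc] at hd1 hd2
    refine ⟨(d1, d2), ?_, by simp [he1, he2]⟩
    simp only [Dset, ppred, mem_coe, mem_filter, mem_product, mem_erase, mem_Icc]
    rw [← he1, ← he2] at ha3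
    have := (adj_cast hN d1 d2 (by omega) (by omega)).1 ha3
    exact ⟨⟨⟨by omega, by omega, by omega⟩, ⟨by omega, by omega, by omega⟩⟩, this⟩

lemma pairCount_translate {N k : ℕ} [NeZero N] (v : ZMod N) :
    pairCount (circulant N k) v = pairCount (circulant N k) 0 := by
  unfold pairCount
  refine Finset.card_nbij (fun p => (p.1 - v, p.2 - v)) ?_ ?_ ?_
  · intro p hp
    simp only [mem_coe, mem_filter, mem_univ, true_and] at hp ⊢
    refine ⟨(adj_translate' v p.1).1 hp.1, (adj_translate' v p.2).1 hp.2.1, ?_⟩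
    exact (adj_translate p.1 p.2 v).2 hp.2.2
  · intro p _ q _ hpq
    simp only [Prod.ext_iff] at hpq ⊢
    exact ⟨by linear_combination hpq.1, by linear_combination hpq.2⟩
  · intro p hp
    simp only [mem_coe, mem_filter, mem_univ, true_and] at hp
    refine ⟨(p.1 + v, p.2 + v), ?_, by simp⟩
    simp only [mem_coe, mem_filter, mem_univ, true_and]
    refine ⟨(adj_translate' v _).2 (by simpa using hp.1),
            (adj_translate' v _).2 (by simpa using hp.2.1), ?_⟩
    have h3 := (adj_translate (k := k) (p.1 + v) (p.2 + v) v).1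
    simp only [add_sub_cancel_right] at h3
    exact h3 hp.2.2

lemma degree_circulant {N h : ℕ} [NeZero N] (hN : 2*h < N) (v : ZMod N) :
    (circulant N (2*h)).degree v = 2*h := by
  rw [SimpleGraph.degree, SimpleGraph.neighborFinset_eq_filter]
  have step1 : (univ.filter ((circulant N (2*h)).Adj v)).card
      = (univ.filter ((circulant N (2*h)).Adj 0)).card := by
    refine Finset.card_nbij (fun p => p - v) ?_ ?_ ?_
    · intro p hp
      simp only [mem_coe, mem_filter, mem_univ, true_and] at hp ⊢
      exact (adj_translate' v p).1 hp
    · intro p _ q _ hpq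
      dsimp at hpq
      linear_combination hpq
    · intro p hp
      simp only [mem_coe, mem_filter, mem_univ, true_and] at hp
      refine ⟨p + v, ?_, by simp⟩
      simp only [mem_coe, mem_filter, mem_univ, true_and]
      exact (adj_translate' v _).2 (by simpa using hp)
  rw [step1]
  have step2 : (univ.filter ((circulant N (2*h)).Adj 0)) = (Dset h).image (Int.cast) := by
    ext i
    simp only [mem_filter, mem_univ, true_and, mem_image, Dset]
    exact adj_zero_iff hN i
  rw [step2, Finset.card_image_of_injOn]
  · rw [Dset, card_erase_of_mem (by simp only [mem_Icc]; omega), Int.card_Icc]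
    omega
  · intro a ha b hb hab
    simp only [Dset, mem_coe, mem_erase, mem_Icc] at ha hb
    exact intCast_injOn_Icc hN a b (by omega) (by omega) hab

section
section
variable {N k m h : ℕ} [NeZero N]

lemma adjT_some_some (i j : ZMod N) :
    (typeII N k m).Adj (some i) (some j) ↔ (circulant N k).Adj i j := by
  constructor
  · rintro (⟨i', j', hi, hj, hadj⟩ | ⟨i', _, ⟨h1, h2⟩ | ⟨h1, h2⟩⟩)
    · simp only [Option.some.injEq] at hi hj; subst hi; subst hj; exact hadj
    · exact absurd h1 (by simp)
    · exact absurd h1 (by simp)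
  · intro hadj; exact Or.inl ⟨i, j, rfl, rfl, hadj⟩

lemma adjT_none_some (i : ZMod N) :
    (typeII N k m).Adj none (some i) ↔ i.val < m := by
  constructor
  · rintro (⟨i', j', h1, _, _⟩ | ⟨i', hi', ⟨h1, h2⟩ | ⟨h1, h2⟩⟩)
    · exact absurd h1 (by simp)
    · simp only [Option.some.injEq] at h2; subst h2; exact hi'
    · exact absurd h1 (by simp)
  · intro hv; exact Or.inr ⟨i, hv, Or.inl ⟨rfl, rfl⟩⟩

lemma adjT_some_none (i : ZMod N) :
    (typeII N k m).Adj (some i) none ↔ i.val < m := by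
  rw [(typeII N k m).adj_comm, adjT_none_some]

/-- the `m` attached vertices form a clique -/
lemma clique_adj (hN : 2*h < N) (hm : m ≤ h + 1) (i j : ZMod N)
    (hi : i.val < m) (hj : j.val < m) (hij : i ≠ j) : (circulant N (2*h)).Adj i j := by
  have hci : ((i.val : ℤ) : ZMod N) = i := by
    have h0 : ((i.val : ℕ) : ZMod N) = i := ZMod.natCast_rightInverse i
    exact_mod_cast h0
  have hcj : ((j.val : ℤ) : ZMod N) = j := by
    have h0 : ((j.val : ℕ) : ZMod N) = j := ZMod.natCast_rightInverse j
    exact_mod_cast h0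
  have hvne : (i.val : ℤ) ≠ (j.val : ℤ) := by
    intro hvv
    apply hij
    rw [← hci, ← hcj, hvv]
  rw [← hci, ← hcj]
  exact (adj_cast hN _ _ (by omega) (by omega)).2 ⟨hvne, by omega⟩

/-- the set of attached vertices -/
noncomputable def Sm (N m : ℕ) [NeZero N] : Finset (ZMod N) := univ.filter (fun i : ZMod N => i.val < m)

lemma card_Sm (hmN : m ≤ N) : (Sm N m).card = m := by
  have hc : (Sm N m).card = (range m).card := by
    refine Finset.card_nbij' (fun i => i.val) (fun a => (a : ZMod N)) ?_ ?_ ?_ ?_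
    · intro i hi; simp only [Sm, mem_coe, mem_filter, mem_univ, true_and] at hi
      simpa using hi
    · intro a ha; simp only [mem_coe, mem_range] at ha
      simp only [Sm, mem_coe, mem_filter, mem_univ, true_and]
      rwa [ZMod.val_cast_of_lt (by omega)]
    · intro i _; exact ZMod.natCast_rightInverse i
    · intro a ha; simp only [mem_coe, mem_range] at ha
      exact ZMod.val_cast_of_lt (by omega)
  simpa using hc

lemma degree_none : (typeII N k m).degree none = (Sm N m).card := by
  rw [SimpleGraph.degree, SimpleGraph.neighborFinset_eq_filter]
  have hset : univ.filter ((typeII N k m).Adj none) = (Sm N m).image some := by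
    ext a
    rcases a with _ | i
    · simp [(typeII N k m).loopless.irrefl none]
    · simp [adjT_none_some, Sm]
  rw [hset]
  exact Finset.card_image_of_injective _ (Option.some_injective _)

lemma degree_some (hN : 2*h < N) (v : ZMod N) :
    (typeII N (2*h) m).degree (some v) = 2*h + (if v.val < m then 1 else 0) := by
  classical
  rw [SimpleGraph.degree, SimpleGraph.neighborFinset_eq_filter]
  have hset : univ.filter ((typeII N (2*h) m).Adj (some v))
      = (univ.filter ((circulant N (2*h)).Adj v)).image some
        ∪ (if v.val < m then {none} else ∅) := by
    ext a
    match a with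
    | none =>
      simp only [mem_filter, mem_univ, true_and, mem_union, mem_image, adjT_some_none]
      constructor
      · intro hv; right; simp [hv]
      · rintro (⟨_, _, hc⟩ | hc)
        · exact absurd hc (by simp)
        · split_ifs at hc with hsp
          · exact hsp
          · exact absurd hc (by simp)
    | some j =>
      simp only [mem_filter, mem_univ, true_and, mem_union, mem_image, adjT_some_some,
        Option.some.injEq]
      constructor
      · intro hadj; exact Or.inl ⟨j, hadj, rfl⟩
      · rintro (⟨j', hadj, hj'⟩ | hc)
        · subst hj'; exact hadj
        · split_ifs at hc <;> simp at hc
  rw [hset, card_union_of_disjoint, Finset.card_image_of_injective _ (Option.some_injective _)]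
  · congr 1
    · -- degree of circulant vertex = 2*h : reuse
      have hd := degree_circulant hN v
      rwa [SimpleGraph.degree, SimpleGraph.neighborFinset_eq_filter] at hd
    · split_ifs <;> simp
  · split_ifs with hsp
    · simp only [disjoint_right, mem_image, mem_singleton]
      rintro a rfl ⟨x, _, hx⟩
      exact absurd hx (by simp)
    · simp

lemma pairCount_none (hN : 2*h < N) (hm : m ≤ h + 1) :
    pairCount (typeII N (2*h) m) none = m * m - m := by
  have hmN : m ≤ N := by omega
  unfold pairCount
  have hset : (univ.filter fun p : Option (ZMod N) × Option (ZMod N) =>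
        (typeII N (2*h) m).Adj none p.1 ∧ (typeII N (2*h) m).Adj none p.2 ∧
          (typeII N (2*h) m).Adj p.1 p.2)
      = (((Sm N m) ×ˢ (Sm N m)).filter fun p => p.1 ≠ p.2).image
          (fun p => (some p.1, some p.2)) := by
    ext ⟨a, b⟩
    match a, b with
    | none, _ => simp [(typeII N (2*h) m).loopless.irrefl none]
    | some i, none =>
      simp only [mem_filter, mem_univ, true_and, mem_image, adjT_none_some, mem_product,
        Prod.ext_iff]
      constructor
      · rintro ⟨_, hc, _⟩; exact absurd hc (by simp [(typeII N (2*h) m).loopless.irrefl none])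
      · rintro ⟨p, _, _, hc⟩; exact absurd hc (by simp)
    | some i, some j =>
      simp only [mem_filter, mem_univ, true_and, mem_image, adjT_none_some, adjT_some_some,
        mem_product, Prod.ext_iff, Option.some.injEq, Sm]
      constructor
      · rintro ⟨hi, hj, hadj⟩
        exact ⟨(i, j), ⟨by simp [hi, hj], (circulant N (2*h)).ne_of_adj hadj⟩, rfl, rfl⟩
      · rintro ⟨⟨x, y⟩, ⟨hxy, hne⟩, rfl, rfl⟩
        simp only [mem_filter, mem_univ, true_and] at hxy
        exact ⟨hxy.1, hxy.2, clique_adj hN hm _ _ hxy.1 hxy.2 hne⟩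
  rw [hset, Finset.card_image_of_injective _ (fun p q hpq => by
    simpa [Prod.ext_iff, Option.some.injEq] using hpq)]
  have hsplit := Finset.card_filter_add_card_filter_not
    (s := (Sm N m) ×ˢ (Sm N m)) (p := fun p => p.1 = p.2)
  have hdiag : (((Sm N m) ×ˢ (Sm N m)).filter fun p => p.1 = p.2).card = m := by
    rw [show (((Sm N m) ×ˢ (Sm N m)).filter fun p => p.1 = p.2)
        = (Sm N m).image (fun a => (a, a)) from ?_]
    · rw [Finset.card_image_of_injective _ (fun p q hpq => by
        simpa [Prod.ext_iff] using hpq)]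
      exact card_Sm hmN
    · ext ⟨a, b⟩
      simp only [mem_filter, mem_product, mem_image, Prod.ext_iff]
      constructor
      · rintro ⟨⟨ha, _⟩, rfl⟩; exact ⟨a, ha, rfl, rfl⟩
      · rintro ⟨x, hx, rfl, rfl⟩; exact ⟨⟨hx, hx⟩, rfl⟩
  have hprod : ((Sm N m) ×ˢ (Sm N m)).card = m * m := by
    rw [Finset.card_product, card_Sm hmN]
  have : (((Sm N m) ×ˢ (Sm N m)).filter fun p => ¬ p.1 = p.2).card = m * m - m := by omega
  simpa [ne_eq] using this


lemma pairCount_some' {N m h : ℕ} [NeZero N] (hN : 2*h < N) (hm : m ≤ h + 1) (v : ZMod N) :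
    pairCount (typeII N (2*h) m) (some v)
      = pairCount (circulant N (2*h)) v + 2 * (if v.val < m then m - 1 else 0) := by
  classical
  set G := circulant N (2*h) with hG
  set T := typeII N (2*h) m with hT
  set Wv : Finset (ZMod N) := univ.filter (fun j : ZMod N => G.Adj v j ∧ j.val < m ∧ v.val < m)
    with hWv
  set A : Finset (Option (ZMod N) × Option (ZMod N)) :=
    (univ.filter fun p : ZMod N × ZMod N => G.Adj v p.1 ∧ G.Adj v p.2 ∧ G.Adj p.1 p.2).image
      (fun p => (some p.1, some p.2)) with hA
  set B : Finset (Option (ZMod N) × Option (ZMod N)) :=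
    Wv.image (fun j => ((none : Option (ZMod N)), some j)) with hB
  set C : Finset (Option (ZMod N) × Option (ZMod N)) :=
    Wv.image (fun j => (some j, (none : Option (ZMod N)))) with hC
  have hAmem : ∀ p : Option (ZMod N) × Option (ZMod N), p ∈ A ↔
      ∃ x y : ZMod N, (G.Adj v x ∧ G.Adj v y ∧ G.Adj x y) ∧ p = (some x, some y) := by
    intro p
    rw [hA, mem_image]
    constructor
    · rintro ⟨⟨x, y⟩, hq, hp⟩
      simp only [mem_filter, mem_univ, true_and] at hq
      exact ⟨x, y, hq, hp.symm⟩
    · rintro ⟨x, y, hq, hp⟩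
      exact ⟨(x, y), by simp only [mem_filter, mem_univ, true_and]; exact hq, hp.symm⟩
  have hBmem : ∀ p : Option (ZMod N) × Option (ZMod N), p ∈ B ↔
      ∃ x : ZMod N, (G.Adj v x ∧ x.val < m ∧ v.val < m) ∧ p = (none, some x) := by
    intro p
    rw [hB, mem_image]
    constructor
    · rintro ⟨x, hq, hp⟩
      simp only [hWv, mem_filter, mem_univ, true_and] at hq
      exact ⟨x, hq, hp.symm⟩
    · rintro ⟨x, hq, hp⟩
      exact ⟨x, by simp only [hWv, mem_filter, mem_univ, true_and]; exact hq, hp.symm⟩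
  have hCmem : ∀ p : Option (ZMod N) × Option (ZMod N), p ∈ C ↔
      ∃ x : ZMod N, (G.Adj v x ∧ x.val < m ∧ v.val < m) ∧ p = (some x, none) := by
    intro p
    rw [hC, mem_image]
    constructor
    · rintro ⟨x, hq, hp⟩
      simp only [hWv, mem_filter, mem_univ, true_and] at hq
      exact ⟨x, hq, hp.symm⟩
    · rintro ⟨x, hq, hp⟩
      exact ⟨x, by simp only [hWv, mem_filter, mem_univ, true_and]; exact hq, hp.symm⟩
  have hset : (univ.filter fun p : Option (ZMod N) × Option (ZMod N) =>
      T.Adj (some v) p.1 ∧ T.Adj (some v) p.2 ∧ T.Adj p.1 p.2) = A ∪ B ∪ C := by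
    ext ⟨a, b⟩
    simp only [mem_filter, mem_univ, true_and, mem_union, hAmem, hBmem, hCmem]
    rcases a with _ | i <;> rcases b with _ | j
    · -- (none, none)
      constructor
      · rintro ⟨_, _, hc⟩; exact absurd hc (T.loopless.irrefl none)
      · rintro ((⟨x, y, _, hp⟩ | ⟨x, _, hp⟩) | ⟨x, _, hp⟩)
        · exact absurd (congrArg Prod.fst hp) (by simp)
        · exact absurd (congrArg Prod.snd hp) (by simp)
        · exact absurd (congrArg Prod.fst hp) (by simp)
    · -- (none, some j)
      constructor
      · rintro ⟨h1, h2, h3⟩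
        rw [hT, adjT_some_none] at h1
        rw [hT, adjT_some_some] at h2
        rw [hT, adjT_none_some] at h3
        exact Or.inl (Or.inr ⟨j, ⟨h2, h3, h1⟩, rfl⟩)
      · rintro ((⟨x, y, _, hp⟩ | ⟨x, hq, hp⟩) | ⟨x, _, hp⟩)
        · exact absurd (congrArg Prod.fst hp) (by simp)
        · have hj : x = j := by
            have := congrArg Prod.snd hp
            exact (by simpa using this : j = x).symm
          subst hj
          exact ⟨(adjT_some_none (k := 2*h) v).2 hq.2.2, (adjT_some_some v x).2 hq.1,
            (adjT_none_some x).2 hq.2.1⟩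
        · exact absurd (congrArg Prod.snd hp) (by simp)
    · -- (some i, none)
      constructor
      · rintro ⟨h1, h2, h3⟩
        rw [hT, adjT_some_some] at h1
        rw [hT, adjT_some_none] at h2
        rw [hT, adjT_some_none] at h3
        exact Or.inr ⟨i, ⟨h1, h3, h2⟩, rfl⟩
      · rintro ((⟨x, y, _, hp⟩ | ⟨x, _, hp⟩) | ⟨x, hq, hp⟩)
        · exact absurd (congrArg Prod.snd hp) (by simp)
        · exact absurd (congrArg Prod.fst hp) (by simp)
        · have hi : x = i := by
            have := congrArg Prod.fst hp
            exact (by simpa using this : i = x).symm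
          subst hi
          exact ⟨(adjT_some_some v x).2 hq.1, (adjT_some_none (k := 2*h) v).2 hq.2.2,
            (adjT_some_none x).2 hq.2.1⟩
    · -- (some i, some j)
      constructor
      · rintro ⟨h1, h2, h3⟩
        rw [hT, adjT_some_some] at h1 h2 h3
        exact Or.inl (Or.inl ⟨i, j, ⟨h1, h2, h3⟩, rfl⟩)
      · rintro ((⟨x, y, hq, hp⟩ | ⟨x, _, hp⟩) | ⟨x, _, hp⟩)
        · have hij : x = i ∧ y = j := by
            have h1 := congrArg Prod.fst hp
            have h2 := congrArg Prod.snd hp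
            simp only at h1 h2
            exact ⟨(by simpa using h1 : i = x).symm, (by simpa using h2 : j = y).symm⟩
          obtain ⟨rfl, rfl⟩ := hij
          exact ⟨(adjT_some_some v x).2 hq.1, (adjT_some_some v y).2 hq.2.1,
            (adjT_some_some x y).2 hq.2.2⟩
        · exact absurd (congrArg Prod.fst hp) (by simp)
        · exact absurd (congrArg Prod.snd hp) (by simp)
  have hdisjAB : Disjoint A B := by
    rw [disjoint_left]
    intro p hpA hpB
    obtain ⟨x, y, _, rfl⟩ := (hAmem p).1 hpA
    obtain ⟨x', _, hp⟩ := (hBmem _).1 hpB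
    exact absurd (congrArg Prod.fst hp) (by simp)
  have hdisjABC : Disjoint (A ∪ B) C := by
    rw [disjoint_left]
    intro p hpAB hpC
    obtain ⟨x, _, rfl⟩ := (hCmem p).1 hpC
    rcases mem_union.1 hpAB with hpA | hpB
    · obtain ⟨x', y', _, hp⟩ := (hAmem _).1 hpA
      exact absurd (congrArg Prod.snd hp) (by simp)
    · obtain ⟨x', _, hp⟩ := (hBmem _).1 hpB
      exact absurd (congrArg Prod.fst hp) (by simp)
  have hWcard : Wv.card = if v.val < m then m - 1 else 0 := by
    by_cases hv : v.val < m
    · rw [if_pos hv]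
      have : Wv = (Sm N m).erase v := by
        ext j
        simp only [hWv, Sm, mem_filter, mem_univ, true_and, mem_erase]
        constructor
        · rintro ⟨hadj, hjm, _⟩
          exact ⟨(G.ne_of_adj hadj).symm, hjm⟩
        · rintro ⟨hne, hjm⟩
          exact ⟨clique_adj hN hm v j hv hjm (Ne.symm hne), hjm, hv⟩
      rw [this, card_erase_of_mem (by simp only [Sm, mem_filter, mem_univ, true_and]; exact hv),
        card_Sm (by omega)]
    · rw [if_neg hv]
      rw [Finset.card_eq_zero]
      ext j
      simp only [hWv, mem_filter, mem_univ, true_and, notMem_empty, iff_false]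
      rintro ⟨_, _, hc⟩
      exact hv hc
  have hcards : pairCount T (some v) = pairCount G v + Wv.card + Wv.card := by
    unfold pairCount
    rw [hset, card_union_of_disjoint hdisjABC, card_union_of_disjoint hdisjAB]
    rw [hA, hB, hC,
      Finset.card_image_of_injective _ (fun p q hpq => by
        simpa [Prod.ext_iff] using hpq),
      Finset.card_image_of_injective _ (fun p q hpq => by
        simpa [Prod.ext_iff] using hpq),
      Finset.card_image_of_injective _ (fun p q hpq => by
        simpa [Prod.ext_iff] using hpq)]
  rw [hcards, hWcard]
  split_ifs <;> omega

end

lemma nbrEdges_eq_pairCount {V : Type*} [Fintype V] (G : SimpleGraph V) (v : V) :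
    nbrEdges G v = pairCount G v / 2 := rfl

lemma gauss' (n : ℕ) : (∑ i ∈ range n, i) * 2 + n = n * n := by
  have h0 := Finset.sum_range_id_mul_two n
  cases n with
  | zero => simp
  | succ p =>
    rw [Nat.succ_sub_one] at h0
    calc (∑ i ∈ range (p+1), i) * 2 + (p+1) = (p+1)*p + (p+1) := by rw [h0]
      _ = (p+1)*(p+1) := by ring


theorem stmt10 (N k m : ℕ) [NeZero N] (hke : Even k) (hk4 : 4 ≤ k) (hN : k < N)
    (hm1 : 1 < m) (hm2 : m ≤ k / 2 + 1)
    (r : ℕ) (hr : r = min (N - k - 1) (k / 2))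
    (A : ℚ) (hA : A = (k.choose 2 : ℚ) - k * r / 2 + r * (r - 1) / 2) :
    clusteringCoeff (typeII N k m) =
      (((N : ℚ) - m) * A / (k.choose 2 : ℚ) + m * (A + m - 1) / ((k + 1).choose 2 : ℚ) + 1)
        / ((N : ℚ) + 1) := by
  obtain ⟨t, htk⟩ := hke
  have hk2t : k = 2*t := by omega
  rw [hk2t] at hk4 hN hm2 hr hA ⊢
  have ht2 : 2 ≤ t := by omega
  have hNt : 2*t < N := hN
  have hm2' : m ≤ t + 1 := by omega
  have hmN : m ≤ N := by omega
  set T := typeII N (2*t) m with hT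
  set u := ∑ i ∈ range t, i with hu
  set q := 3*t+1-N with hqdef
  set w := ∑ i ∈ range (q+1), i with hw
  have hu2 : u * 2 + t = t * t := gauss' t
  have hw2 : w * 2 = (q+1) * q := by
    have := Finset.sum_range_id_mul_two (q+1)
    simpa using this
  have hqt : q ≤ t := by omega
  have hrq : r + q = t := by omega
  -- vertex `none`
  have hdegnone : T.degree none = m := by rw [hT, degree_none, card_Sm hmN]
  have hmm : m * m - m = m * (m - 1) := by
    cases m with
    | zero => rfl
    | succ n =>
      rw [Nat.succ_sub_one, Nat.mul_succ]
      omega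
  have hnbrnone : nbrEdges T none = m.choose 2 := by
    rw [nbrEdges_eq_pairCount, hT, pairCount_none hNt hm2', Nat.choose_two_right, hmm]
  have hchoosem : 0 < m.choose 2 := Nat.choose_pos (by omega)
  have hlcnone : localClustering T none = 1 := by
    unfold localClustering
    rw [hdegnone, hnbrnone]
    exact div_self (by exact_mod_cast hchoosem.ne')
  -- vertices `some v`
  have hpcv : ∀ v : ZMod N, pairCount (circulant N (2*t)) v = 6*u + 2*w := fun v => by
    rw [pairCount_translate, pairCount_zero hNt]
  have hnbrsome : ∀ v : ZMod N, nbrEdges T (some v)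
      = (3*u + w) + (if v.val < m then m - 1 else 0) := fun v => by
    rw [nbrEdges_eq_pairCount, hT, pairCount_some' hNt hm2' v, hpcv v]
    split_ifs <;> omega
  -- choose values
  have hch2t : (2*t).choose 2 = t * (2*t - 1) := by
    rw [Nat.choose_two_right, Nat.mul_assoc]
    exact Nat.mul_div_cancel_left _ (by norm_num)
  have hch2t1 : (2*t+1).choose 2 = (2*t+1) * t := by
    rw [Nat.choose_two_right, show (2*t+1) - 1 = 2*t by omega,
      show (2*t+1)*(2*t) = ((2*t+1)*t)*2 by ring]
    exact Nat.mul_div_cancel _ (by norm_num)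
  have hchQ : ((2*t).choose 2 : ℚ) = (t:ℚ) * (2*(t:ℚ) - 1) := by
    rw [hch2t, Nat.cast_mul, Nat.cast_sub (show 1 ≤ 2*t by omega)]
    push_cast
    ring
  have hchQ1 : (((2*t+1)).choose 2 : ℚ) = (2*(t:ℚ)+1) * (t:ℚ) := by
    rw [hch2t1]
    push_cast
    ring
  have hch2t_pos : (0:ℚ) < ((2*t).choose 2 : ℚ) := by
    exact_mod_cast Nat.choose_pos (show 2 ≤ 2*t by omega)
  have hch2t1_pos : (0:ℚ) < ((2*t+1).choose 2 : ℚ) := by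
    exact_mod_cast Nat.choose_pos (show 2 ≤ 2*t+1 by omega)
  -- E = A
  have hu2Q : (u:ℚ)*2 + t = (t:ℚ)*(t:ℚ) := by exact_mod_cast hu2
  have hw2Q : (w:ℚ)*2 = ((q:ℚ)+1)*(q:ℚ) := by exact_mod_cast hw2
  have hrQ : (r:ℚ) = (t:ℚ) - (q:ℚ) := by
    have : (r:ℚ) + q = t := by exact_mod_cast hrq
    linarith
  have hEA : ((3*u + w : ℕ) : ℚ) = A := by
    rw [hA, hchQ, hrQ]
    push_cast
    linear_combination (3/2 : ℚ) * hu2Q + (1/2 : ℚ) * hw2Q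
  -- local clustering of some vertices
  set c2 : ℚ := ((3*u + w : ℕ) : ℚ) / ((2*t).choose 2 : ℚ) with hc2
  set c1 : ℚ := (((3*u + w : ℕ) : ℚ) + (m:ℚ) - 1) / (((2*t+1)).choose 2 : ℚ) with hc1
  have hlcsome : ∀ v : ZMod N,
      localClustering T (some v) = if v.val < m then c1 else c2 := by
    intro v
    unfold localClustering
    rw [hnbrsome v, hT, degree_some hNt v]
    by_cases hv : v.val < m
    · rw [if_pos hv, if_pos hv, if_pos hv]
      have hcast : (((3*u+w) + (m - 1) : ℕ) : ℚ) = ((3*u + w : ℕ) : ℚ) + (m:ℚ) - 1 := by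
        push_cast [Nat.cast_sub (show 1 ≤ m by omega)]
        ring
      rw [hcast, hc1]
    · rw [if_neg hv, if_neg hv, if_neg hv, hc2]
      norm_num
  -- assemble
  unfold clusteringCoeff
  rw [Fintype.sum_option, hlcnone]
  have hcardsplit := Finset.card_filter_add_card_filter_not
    (s := (univ : Finset (ZMod N))) (p := fun v : ZMod N => v.val < m)
  have hcardm : ((univ : Finset (ZMod N)).filter (fun v : ZMod N => v.val < m)).card = m :=
    card_Sm hmN
  have hcardrest : ((univ : Finset (ZMod N)).filter (fun v : ZMod N => ¬ v.val < m)).card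
      = N - m := by
    have hcu : (univ : Finset (ZMod N)).card = N := by
      rw [Finset.card_univ, ZMod.card]
    omega
  have hsum : (∑ v : ZMod N, localClustering T (some v))
      = (m:ℚ) * c1 + ((N - m : ℕ) : ℚ) * c2 := by
    rw [Finset.sum_congr rfl (fun v _ => hlcsome v), Finset.sum_ite, Finset.sum_const,
      Finset.sum_const, hcardm, hcardrest, nsmul_eq_mul, nsmul_eq_mul]
  rw [hsum, Fintype.card_option, ZMod.card]
  rw [hc1, hc2, hEA]
  have hNm : ((N - m : ℕ) : ℚ) = (N:ℚ) - m := by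
    rw [Nat.cast_sub hmN]
  rw [hNm]
  push_cast
  ring
end
end
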